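/- arXiv:1911.04405 — 3 statements merged into one kernel-verified Lean document; each statement's English description precedes it below -/
import Mathlib

section
/- For d = 2 and any s ∈ ℝ, n ∈ ℕ, the time-dependent vector field u^{±}(t, x₁, x₂) = ( ±1/n + n^{−s} cos(n x₂ ∓ t), ±1/n + n^{−s} cos(n x₁ ∓ t) ) is divergence free and ∂_t u^{±} + (u^{±}·∇)u^{±} is a gradient field, so u^{±} is an exact solution of the incompressible Euler equations ∂_t u + (u·∇)u + ∇p = 0 on 𝕋² with an appropriately chosen pressure p. -/
open Real

private lemma hasDerivAt_cos_aux (c a b k x : ℝ) :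
    HasDerivAt (fun y => c + a * Real.cos (b * y - k)) (-(a * b * Real.sin (b * x - k))) x := by
  have h1 : HasDerivAt (fun y : ℝ => b * y - k) b x := by
    simpa using ((hasDerivAt_id x).const_mul b).sub_const k
  have h2 := (Real.hasDerivAt_cos (b * x - k)).comp x h1
  have h3 := h2.const_mul a
  have h4 := h3.const_add c
  exact h4.congr_deriv (by ring)

private lemma hasDerivAt_cos_time (c a m e x : ℝ) :
    HasDerivAt (fun τ => c + a * Real.cos (m - e * τ)) (a * e * Real.sin (m - e * x)) x := by
  have h1 : HasDerivAt (fun τ : ℝ => m - e * τ) (-e) x := by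
    simpa using ((hasDerivAt_id x).const_mul e).const_sub m
  have h2 := (Real.hasDerivAt_cos (m - e * x)).comp x h1
  have h3 := h2.const_mul a
  have h4 := h3.const_add c
  exact h4.congr_deriv (by ring)

private lemma hasDerivAt_sin_aux (A b k B x : ℝ) :
    HasDerivAt (fun y => A * Real.sin (b * y - k) * B) (A * (b * Real.cos (b * x - k)) * B) x := by
  have h1 : HasDerivAt (fun y : ℝ => b * y - k) b x := by
    simpa using ((hasDerivAt_id x).const_mul b).sub_const k
  have h2 := (Real.hasDerivAt_sin (b * x - k)).comp x h1
  have h3 := (h2.const_mul A).mul_const B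
  exact h3.congr_deriv (by ring)

/-- For `d = 2`, the vector field
`u^{±}(t,x₁,x₂) = (±1/n + n^{-s} cos(n x₂ ∓ t), ±1/n + n^{-s} cos(n x₁ ∓ t))` is
divergence free, and `∂_t u^{±} + (u^{±}·∇)u^{±}` is a gradient field, so `u^{±}` is an
exact solution of the incompressible Euler equations on `𝕋²` for a suitable pressure `p`. -/
theorem euler_exact_solution_family (s : ℝ) (n : ℕ) (hn : 1 ≤ n)
    (ε : ℝ) (hε : ε = 1 ∨ ε = -1) :
    let u₁ : ℝ → ℝ → ℝ → ℝ := fun t x₁ x₂ => ε / n + (n : ℝ) ^ (-s) * Real.cos (n * x₂ - ε * t)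
    let u₂ : ℝ → ℝ → ℝ → ℝ := fun t x₁ x₂ => ε / n + (n : ℝ) ^ (-s) * Real.cos (n * x₁ - ε * t)
    -- divergence free
    (∀ t x₁ x₂, deriv (fun y => u₁ t y x₂) x₁ + deriv (fun y => u₂ t x₁ y) x₂ = 0) ∧
    -- `∂_t u + (u·∇)u + ∇p = 0` for some (periodic-in-space) pressure `p`
    ∃ p : ℝ → ℝ → ℝ → ℝ,
      (∀ t x₁ x₂,
        deriv (fun τ => u₁ τ x₁ x₂) t +
          (u₁ t x₁ x₂ * deriv (fun y => u₁ t y x₂) x₁ +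
            u₂ t x₁ x₂ * deriv (fun y => u₁ t x₁ y) x₂) +
          deriv (fun y => p t y x₂) x₁ = 0) ∧
      (∀ t x₁ x₂,
        deriv (fun τ => u₂ τ x₁ x₂) t +
          (u₁ t x₁ x₂ * deriv (fun y => u₂ t y x₂) x₁ +
            u₂ t x₁ x₂ * deriv (fun y => u₂ t x₁ y) x₂) +
          deriv (fun y => p t x₁ y) x₂ = 0) := by
  intro u₁ u₂
  have hn0 : (n : ℝ) ≠ 0 := by positivity
  set a : ℝ := (n : ℝ) ^ (-s) with ha
  constructor
  · intro t x₁ x₂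
    simp [u₁, u₂]
  · refine ⟨fun t x₁ x₂ => a * Real.sin ((n : ℝ) * x₁ - ε * t) * (a * Real.sin ((n : ℝ) * x₂ - ε * t)), ?_, ?_⟩
    · intro t x₁ x₂
      have d1 : deriv (fun τ => u₁ τ x₁ x₂) t = a * ε * Real.sin ((n : ℝ) * x₂ - ε * t) :=
        (hasDerivAt_cos_time (ε / n) a ((n : ℝ) * x₂) ε t).deriv
      have d2 : deriv (fun y => u₁ t y x₂) x₁ = 0 := by
        simp [u₁]
      have d3 : deriv (fun y => u₁ t x₁ y) x₂ = -(a * n * Real.sin ((n : ℝ) * x₂ - ε * t)) :=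
        (hasDerivAt_cos_aux (ε / n) a n (ε * t) x₂).deriv
      have d4 : deriv (fun y => a * Real.sin ((n : ℝ) * y - ε * t) *
          (a * Real.sin ((n : ℝ) * x₂ - ε * t))) x₁ =
          a * ((n : ℝ) * Real.cos ((n : ℝ) * x₁ - ε * t)) * (a * Real.sin ((n : ℝ) * x₂ - ε * t)) :=
        (hasDerivAt_sin_aux a n (ε * t) (a * Real.sin ((n : ℝ) * x₂ - ε * t)) x₁).deriv
      show deriv (fun τ => u₁ τ x₁ x₂) t +
          (u₁ t x₁ x₂ * deriv (fun y => u₁ t y x₂) x₁ +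
            u₂ t x₁ x₂ * deriv (fun y => u₁ t x₁ y) x₂) + _ = 0
      rw [d1, d2, d3, d4]
      simp only [u₁, u₂]
      field_simp
      ring
    · intro t x₁ x₂
      have d1 : deriv (fun τ => u₂ τ x₁ x₂) t = a * ε * Real.sin ((n : ℝ) * x₁ - ε * t) :=
        (hasDerivAt_cos_time (ε / n) a ((n : ℝ) * x₁) ε t).deriv
      have d2 : deriv (fun y => u₂ t x₁ y) x₂ = 0 := by
        simp [u₂]
      have d3 : deriv (fun y => u₂ t y x₂) x₁ = -(a * n * Real.sin ((n : ℝ) * x₁ - ε * t)) :=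
        (hasDerivAt_cos_aux (ε / n) a n (ε * t) x₁).deriv
      have d4 : deriv (fun y => a * Real.sin ((n : ℝ) * x₁ - ε * t) *
          (a * Real.sin ((n : ℝ) * y - ε * t))) x₂ =
          a * Real.sin ((n : ℝ) * x₁ - ε * t) * (a * ((n : ℝ) * Real.cos ((n : ℝ) * x₂ - ε * t))) := by
        have h1 : HasDerivAt (fun y : ℝ => (n : ℝ) * y - ε * t) (n : ℝ) x₂ := by
          simpa using ((hasDerivAt_id x₂).const_mul (n : ℝ)).sub_const (ε * t)
        have h2 := (Real.hasDerivAt_sin ((n : ℝ) * x₂ - ε * t)).comp x₂ h1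
        have h3 := (h2.const_mul a).const_mul (a * Real.sin ((n : ℝ) * x₁ - ε * t))
        have h4 : HasDerivAt (fun y => a * Real.sin ((n : ℝ) * x₁ - ε * t) *
            (a * Real.sin ((n : ℝ) * y - ε * t)))
            (a * Real.sin ((n : ℝ) * x₁ - ε * t) * (a * ((n : ℝ) * Real.cos ((n : ℝ) * x₂ - ε * t)))) x₂ := by
          exact h3.congr_deriv (by ring)
        exact h4.deriv
      show deriv (fun τ => u₂ τ x₁ x₂) t +
          (u₁ t x₁ x₂ * deriv (fun y => u₂ t y x₂) x₁ +
            u₂ t x₁ x₂ * deriv (fun y => u₂ t x₁ y) x₂) + _ = 0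
      rw [d1, d2, d3, d4]
      simp only [u₁, u₂]
      field_simp
      ring
end

section
/- Let 0 < σ < 1, t ∈ ℝ, n ∈ ℕ, and define u(x₁,x₂) = ( 1/n + n^{−1−σ} cos(n x₂ − t), 1/n + n^{−1−σ} cos(n x₁ − t) ) on ℝ². Then for every multi-index α with |α| = 1 and all x ≠ y, |∂^α u(x) − ∂^α u(y)| ≤ n^{1−σ} |x − y|, and hence sup_{0<|x−y|<h} |∂^α u(x) − ∂^α u(y)|/|x−y|^σ ≤ n^{1−σ} h^{1−σ}, which tends to 0 as h → 0. -/
/-!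
Up to the constant `1/n`, each component of `u` is `c cos(n s - t)` evaluated at the *other*
coordinate, with `c = n^{-1-σ}`. Hence `∂_α u` is the coordinate vector at the swapped index
with entry `-c n sin(n x_α - t)`, and since `sin` is 1-Lipschitz this entry is Lipschitz in `x`
with constant `c n · n = n^{1-σ}`. Dividing the Lipschitz bound `K r` by `r^σ` leaves
`K r^{1-σ} ≤ K h^{1-σ}`, which vanishes as `h → 0` because `σ < 1`.
-/

open Real Filter Topology

section PiLp
variable {𝕜 ι H : Type*} [NontriviallyNormedField 𝕜] [Fintype ι]
  [NormedAddCommGroup H] [NormedSpace 𝕜 H] {p : ENNReal} [Fact (1 ≤ p)]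

theorem fderiv_piLp_apply {f : H → PiLp p (fun _ : ι => 𝕜)} {y : H}
    (hf : DifferentiableAt 𝕜 f y) (v : H) (i : ι) :
    fderiv 𝕜 f y v i = fderiv 𝕜 (fun x => f x i) y v := by
  have hi := (hasFDerivWithinAt_piLp p (t := Set.univ)).1 hf.hasFDerivAt.hasFDerivWithinAt i
  rw [hasFDerivWithinAt_univ] at hi
  rw [hi.fderiv]
  rfl

variable [DecidableEq ι] {φ φ' : 𝕜 → 𝕜}

theorem fderiv_toLp_comp_perm_single (hφ : ∀ s, HasDerivAt φ (φ' s) s)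
    (τ : Equiv.Perm ι) (x : PiLp p (fun _ : ι => 𝕜)) (α : ι) :
    fderiv 𝕜 (fun x : PiLp p (fun _ : ι => 𝕜) => WithLp.toLp p (fun i => φ (x (τ i)))) x
      (PiLp.single p α 1) = PiLp.single p (τ.symm α) (φ' (x α)) := by
  have hcomp (j : ι) : HasFDerivAt (fun x : PiLp p (fun _ : ι => 𝕜) => φ (x j))
      (φ' (x j) • PiLp.proj p _ j) x :=
    (hφ (x j)).comp_hasFDerivAt x (PiLp.hasFDerivAt_apply (𝕜 := 𝕜) p x j)
  have hdiff : DifferentiableAt 𝕜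
      (fun x : PiLp p (fun _ : ι => 𝕜) => WithLp.toLp p (fun i => φ (x (τ i)))) x :=
    (differentiableAt_piLp p).2 fun i => (hcomp (τ i)).differentiableAt
  ext i
  rw [fderiv_piLp_apply hdiff, (hcomp (τ i)).fderiv]
  by_cases h : τ i = α <;> simp [h, Equiv.eq_symm_apply]

theorem norm_fderiv_toLp_comp_perm_single_sub_le (hφ : ∀ s, HasDerivAt φ (φ' s) s) {K : ℝ}
    (hK : ∀ a b, ‖φ' a - φ' b‖ ≤ K * ‖a - b‖) (τ : Equiv.Perm ι) (α : ι)
    (x y : PiLp p (fun _ : ι => 𝕜)) :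
    ‖fderiv 𝕜 (fun x : PiLp p (fun _ : ι => 𝕜) => WithLp.toLp p (fun i => φ (x (τ i)))) x
        (PiLp.single p α 1) -
      fderiv 𝕜 (fun x : PiLp p (fun _ : ι => 𝕜) => WithLp.toLp p (fun i => φ (x (τ i)))) y
        (PiLp.single p α 1)‖ ≤ K * ‖x - y‖ := by
  have hK0 : 0 ≤ K := by simpa using (norm_nonneg _).trans (hK 1 0)
  rw [fderiv_toLp_comp_perm_single hφ, fderiv_toLp_comp_perm_single hφ, ← PiLp.single_sub,
    PiLp.norm_single]
  calc ‖φ' (x α) - φ' (y α)‖ ≤ K * ‖(x - y) α‖ := hK _ _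
    _ ≤ K * ‖x - y‖ := mul_le_mul_of_nonneg_left (PiLp.norm_apply_le _ _) hK0

end PiLp

theorem hasDerivAt_const_add_mul_cos (a c ω t s : ℝ) :
    HasDerivAt (fun s => a + c * cos (ω * s - t)) (-(c * ω) * sin (ω * s - t)) s := by
  have h := ((((hasDerivAt_id s).const_mul ω).sub_const t).cos.const_mul c).const_add a
  exact h.congr_deriv (by simp only [id, mul_one]; ring)

theorem abs_mul_sin_sub_mul_sin_le (k ω t a b : ℝ) :
    |k * sin (ω * a - t) - k * sin (ω * b - t)| ≤ |k| * |ω| * |a - b| := by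
  calc |k * sin (ω * a - t) - k * sin (ω * b - t)|
      = |k| * |sin (ω * a - t) - sin (ω * b - t)| := by rw [← mul_sub, abs_mul]
    _ ≤ |k| * |(ω * a - t) - (ω * b - t)| :=
        mul_le_mul_of_nonneg_left (abs_sin_sub_sin_le _ _) (abs_nonneg k)
    _ = |k| * |ω| * |a - b| := by rw [show ω * a - t - (ω * b - t) = ω * (a - b) by ring,
          abs_mul, mul_assoc]

theorem rpow_neg_one_sub_mul_self_mul_self {x : ℝ} (hx : 0 ≤ x) {σ : ℝ} (hσ : σ ≠ 1) :
    x ^ (-1 - σ) * x * x = x ^ (1 - σ) := by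
  rw [show 1 - σ = (-1 - σ) + 2 by ring, rpow_add' hx (by contrapose! hσ; linarith), rpow_two]
  ring

theorem div_rpow_le_mul_rpow_one_sub {d K r h σ : ℝ} (hr : 0 < r) (hrh : r ≤ h) (hK : 0 ≤ K)
    (hσ : σ ≤ 1) (hd : d ≤ K * r) : d / r ^ σ ≤ K * h ^ (1 - σ) := by
  rw [div_le_iff₀ (rpow_pos_of_pos hr σ)]
  calc d ≤ K * r := hd
    _ = K * r ^ (1 - σ) * r ^ σ := by
        rw [mul_assoc, ← rpow_add hr, sub_add_cancel, rpow_one]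
    _ ≤ K * h ^ (1 - σ) * r ^ σ := by gcongr

theorem tendsto_const_mul_rpow_nhdsGT_zero (K : ℝ) {p : ℝ} (hp : 0 < p) :
    Tendsto (fun h : ℝ => K * h ^ p) (𝓝[>] 0) (𝓝 0) := by
  have h := ((continuousAt_rpow_const 0 p (Or.inr hp.le)).tendsto.const_mul K).mono_left
    (nhdsWithin_le_nhds (s := Set.Ioi 0))
  simpa [zero_rpow hp.ne'] using h

theorem little_holder_vanishing_general (σ : ℝ) (hσ1 : σ < 1)
    (t : ℝ) (n : ℕ) :
    let u : EuclideanSpace ℝ (Fin 2) → EuclideanSpace ℝ (Fin 2) := fun x =>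
      WithLp.toLp 2 (fun i : Fin 2 => if i = 0 then
          1 / (n : ℝ) + (n : ℝ) ^ (-(1 : ℝ) - σ) * Real.cos (n * x 1 - t)
        else
          1 / (n : ℝ) + (n : ℝ) ^ (-(1 : ℝ) - σ) * Real.cos (n * x 0 - t))
    (∀ α : Fin 2, ∀ x y : EuclideanSpace ℝ (Fin 2), x ≠ y →
        ‖fderiv ℝ u x (EuclideanSpace.single α 1) - fderiv ℝ u y (EuclideanSpace.single α 1)‖ ≤
          (n : ℝ) ^ ((1 : ℝ) - σ) * ‖x - y‖) ∧
    (∀ α : Fin 2, ∀ h : ℝ, 0 < h → ∀ x y : EuclideanSpace ℝ (Fin 2),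
        0 < ‖x - y‖ → ‖x - y‖ < h →
        ‖fderiv ℝ u x (EuclideanSpace.single α 1) - fderiv ℝ u y (EuclideanSpace.single α 1)‖ /
            ‖x - y‖ ^ σ ≤ (n : ℝ) ^ ((1 : ℝ) - σ) * h ^ ((1 : ℝ) - σ)) ∧
    Tendsto (fun h : ℝ => (n : ℝ) ^ ((1 : ℝ) - σ) * h ^ ((1 : ℝ) - σ))
      (nhdsWithin 0 (Set.Ioi 0)) (nhds 0) := by
  intro u
  set c : ℝ := (n : ℝ) ^ (-(1 : ℝ) - σ)
  have hu : u = fun x =>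
      WithLp.toLp 2 fun i => 1 / (n : ℝ) + c * cos (n * x (Equiv.swap 0 1 i) - t) := by
    funext x; ext i; fin_cases i <;> rfl
  have hlip (α : Fin 2) (x y : EuclideanSpace ℝ (Fin 2)) :
      ‖fderiv ℝ u x (EuclideanSpace.single α 1) - fderiv ℝ u y (EuclideanSpace.single α 1)‖ ≤
        (n : ℝ) ^ ((1 : ℝ) - σ) * ‖x - y‖ := by
    refine hu ▸ norm_fderiv_toLp_comp_perm_single_sub_le (hasDerivAt_const_add_mul_cos _ _ _ _)
      (fun a b => ?_) _ α x y
    have hc : 0 ≤ c := by positivity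
    rw [← rpow_neg_one_sub_mul_self_mul_self (Nat.cast_nonneg n) hσ1.ne]
    simpa only [Real.norm_eq_abs, abs_neg, abs_mul, Nat.abs_cast, abs_of_nonneg hc] using
      abs_mul_sin_sub_mul_sin_le (-(c * n)) n t a b
  exact ⟨fun α x y _ => hlip α x y,
    fun α h _ x y hxy hxyh =>
      div_rpow_le_mul_rpow_one_sub hxy hxyh.le (by positivity) hσ1.le (hlip α x y),
    tendsto_const_mul_rpow_nhdsGT_zero _ (sub_pos.2 hσ1)⟩

/-- For `0 < σ < 1` and `u(x₁,x₂) = (1/n + n^{-1-σ} cos(n x₂ - t), 1/n + n^{-1-σ} cos(n x₁ - t))`,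
every first-order partial derivative of `u` satisfies
`|∂^α u(x) - ∂^α u(y)| ≤ n^{1-σ} |x - y|`, hence
`sup_{0<|x-y|<h} |∂^α u(x) - ∂^α u(y)|/|x-y|^σ ≤ n^{1-σ} h^{1-σ} → 0` as `h → 0⁺`. -/
theorem little_holder_vanishing (σ : ℝ) (hσ0 : 0 < σ) (hσ1 : σ < 1)
    (t : ℝ) (n : ℕ) (hn : 1 ≤ n) :
    let u : EuclideanSpace ℝ (Fin 2) → EuclideanSpace ℝ (Fin 2) := fun x =>
      WithLp.toLp 2 (fun i : Fin 2 => if i = 0 then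
          1 / (n : ℝ) + (n : ℝ) ^ (-(1 : ℝ) - σ) * Real.cos (n * x 1 - t)
        else
          1 / (n : ℝ) + (n : ℝ) ^ (-(1 : ℝ) - σ) * Real.cos (n * x 0 - t))
    (∀ α : Fin 2, ∀ x y : EuclideanSpace ℝ (Fin 2), x ≠ y →
        ‖fderiv ℝ u x (EuclideanSpace.single α 1) - fderiv ℝ u y (EuclideanSpace.single α 1)‖ ≤
          (n : ℝ) ^ ((1 : ℝ) - σ) * ‖x - y‖) ∧
    (∀ α : Fin 2, ∀ h : ℝ, 0 < h → ∀ x y : EuclideanSpace ℝ (Fin 2),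
        0 < ‖x - y‖ → ‖x - y‖ < h →
        ‖fderiv ℝ u x (EuclideanSpace.single α 1) - fderiv ℝ u y (EuclideanSpace.single α 1)‖ /
            ‖x - y‖ ^ σ ≤ (n : ℝ) ^ ((1 : ℝ) - σ) * h ^ ((1 : ℝ) - σ)) ∧
    Tendsto (fun h : ℝ => (n : ℝ) ^ ((1 : ℝ) - σ) * h ^ ((1 : ℝ) - σ))
      (nhdsWithin 0 (Set.Ioi 0)) (nhds 0) :=
  little_holder_vanishing_general σ hσ1 t n
end

section
/- Let σ > 0, 1 ≤ q ≤ ∞, δ > 0, and let f be a Schwartz function on ℝ. Then for λ ≫ 1, λ^{δ/2} ‖f‖_{L²(ℝ)} ≲ ‖f(·/λ^δ)‖_{B^σ_{2,q}(ℝ)} ≲ λ^{δ/2} ‖f‖_{B^σ_{2,q}(ℝ)}, with implicit constants independent of λ and f. -/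
open MeasureTheory ENNReal

/-- The `m`-th iterated finite difference `Δ_h^m`. -/
noncomputable def iterDiff (h : ℝ) (m : ℕ) (f : ℝ → ℂ) : ℝ → ℂ :=
  (fun g : ℝ → ℂ => fun x => g (x + h) - g x)^[m] f

/-- The Besov norm `B^σ_{2,q}(ℝ)` via the finite-difference characterization (valid for
`0 < σ < m`):
`‖f‖_{L²} + (∫_0^1 t^{-σq} sup_{|h|≤t} ‖Δ_h^m f‖_{L²}^q dt/t)^{1/q}`, with
`sup_{h≠0} |h|^{-σ} ‖Δ_h^m f‖_{L²}` when `q = ∞`. -/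
noncomputable def besovDiffNorm (σ : ℝ) (q : ℝ≥0∞) (m : ℕ) (f : ℝ → ℂ) : ℝ≥0∞ :=
  eLpNorm f 2 volume +
    if q = ⊤ then
      ⨆ (h : ℝ) (_ : h ≠ 0), ENNReal.ofReal (|h| ^ (-σ)) * eLpNorm (iterDiff h m f) 2 volume
    else
      (∫⁻ t in Set.Ioo (0 : ℝ) 1,
          (ENNReal.ofReal (t ^ (-σ)) *
            ⨆ (h : ℝ) (_ : |h| ≤ t), eLpNorm (iterDiff h m f) 2 volume) ^ q.toReal /
            ENNReal.ofReal t) ^ (1 / q.toReal)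

/-!
Write `s = λ^δ`. Dilation by `s` multiplies `L²` norms by `s^{1/2}` and turns `Δ_h^m` into
`Δ_{h/s}^m`, so the lower bound is just the `L²` term of the norm. For a Schwartz function,
applying the mean value theorem `m` times gives `|Δ_h^m f(x)| ≲ |h|^m (1 + x²)⁻¹` for `|h| ≤ 1`,
hence `‖Δ_h^m f(·/s)‖_{L²} ≲ s^{1/2} s⁻¹ |h|^m` for `|h| ≤ 1`, while `‖Δ_h^m g‖_{L²} ≤ 2^m ‖g‖_{L²}`
for every `h`. Since `m > σ`, the first bound is integrable against `t^{-σq} dt/t`, so the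
difference part of the norm of `f(·/s)` is at most `s^{1/2} (2^m ‖f‖_{L²} + O(s⁻¹))`; once
`λ ≫ 1` the `O(s⁻¹)` term is absorbed by `‖f‖_{L²}` (its size depends on `f`, hence so does `Λ`).
-/

open Set Filter Topology
open scoped SchwartzMap

theorem iterDiff_succ (h : ℝ) (m : ℕ) (f : ℝ → ℂ) :
    iterDiff h (m + 1) f = fun x => iterDiff h m f (x + h) - iterDiff h m f x :=
  Function.iterate_succ_apply' _ _ _

theorem iterDiff_zero_fun (h : ℝ) (m : ℕ) : iterDiff h m (0 : ℝ → ℂ) = 0 := by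
  induction m with
  | zero => rfl
  | succ m ih => rw [iterDiff_succ, ih]; funext x; simp

theorem iterDiff_comp_div (h : ℝ) (m : ℕ) (f : ℝ → ℂ) (s : ℝ) :
    iterDiff h m (fun x => f (x / s)) = fun x => iterDiff (h / s) m f (x / s) := by
  induction m with
  | zero => rfl
  | succ m ih => simp only [iterDiff_succ, ih, add_div]

theorem MeasureTheory.AEStronglyMeasurable.iterDiff {f : ℝ → ℂ}
    (hf : AEStronglyMeasurable f volume) (h : ℝ) (m : ℕ) :
    AEStronglyMeasurable (iterDiff h m f) volume := by
  induction m with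
  | zero => exact hf
  | succ m ih =>
    rw [iterDiff_succ]
    exact (ih.comp_measurePreserving (measurePreserving_add_right volume h)).sub ih

theorem Differentiable.iterDiff {f : ℝ → ℂ} (hf : Differentiable ℝ f) (h : ℝ) (m : ℕ) :
    Differentiable ℝ (iterDiff h m f) := by
  induction m with
  | zero => exact hf
  | succ m ih =>
    rw [iterDiff_succ]
    exact (ih.comp (differentiable_id.add_const h)).sub ih

theorem deriv_iterDiff {f : ℝ → ℂ} (hf : Differentiable ℝ f) (h : ℝ) (m : ℕ) :
    deriv (iterDiff h m f) = iterDiff h m (deriv f) := by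
  induction m with
  | zero => rfl
  | succ m ih =>
    have hd := hf.iterDiff h m
    funext x
    rw [iterDiff_succ, iterDiff_succ, ← ih]
    exact (((hd (x + h)).hasDerivAt.comp_add_const x h).sub (hd x).hasDerivAt).deriv

theorem eLpNorm_iterDiff_le {p : ℝ≥0∞} (hp : 1 ≤ p) {f : ℝ → ℂ}
    (hf : AEStronglyMeasurable f volume) (h : ℝ) (m : ℕ) :
    eLpNorm (iterDiff h m f) p volume ≤ 2 ^ m * eLpNorm f p volume := by
  induction m with
  | zero => simp [iterDiff]
  | succ m ih =>
    have hmeas := hf.iterDiff h m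
    have hshift := measurePreserving_add_right volume h
    calc eLpNorm (iterDiff h (m + 1) f) p volume
        ≤ eLpNorm (iterDiff h m f ∘ (· + h)) p volume + eLpNorm (iterDiff h m f) p volume := by
          rw [iterDiff_succ]
          exact eLpNorm_sub_le (hmeas.comp_measurePreserving hshift) hmeas hp
      _ = 2 * eLpNorm (iterDiff h m f) p volume := by
          rw [eLpNorm_comp_measurePreserving hmeas hshift, two_mul]
      _ ≤ 2 ^ (m + 1) * eLpNorm f p volume := by
          rw [pow_succ', mul_assoc]
          gcongr

theorem eLpNorm_comp_div {E : Type*} [NormedAddCommGroup E] {p : ℝ≥0∞} (hp : p ≠ ∞)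
    {g : ℝ → E} (hg : AEStronglyMeasurable g volume) {s : ℝ} (hs : 0 < s) :
    eLpNorm (fun x => g (x / s)) p volume =
      ENNReal.ofReal s ^ (1 / p).toReal * eLpNorm g p volume := by
  have hdil : MeasurePreserving (fun x : ℝ => x / s) volume (ENNReal.ofReal s • volume) := by
    refine ⟨measurable_div_const s, ?_⟩
    simp_rw [div_eq_inv_mul]
    rw [Real.map_volume_mul_left (inv_ne_zero hs.ne'), inv_inv, abs_of_pos hs]
  rw [← smul_eq_mul, ← eLpNorm_smul_measure_of_ne_top hp]
  exact eLpNorm_comp_measurePreserving (hg.smul_measure _) hdil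

theorem eLpNorm_two_comp_div {E : Type*} [NormedAddCommGroup E] {g : ℝ → E}
    (hg : AEStronglyMeasurable g volume) {s : ℝ} (hs : 0 < s) :
    eLpNorm (fun x => g (x / s)) 2 volume =
      ENNReal.ofReal s ^ (1 / 2 : ℝ) * eLpNorm g 2 volume := by
  rw [eLpNorm_comp_div (by norm_num) hg hs]
  norm_num

theorem inv_one_add_sq_le_four_mul {x y : ℝ} (hxy : |y - x| ≤ 1) :
    (1 + y ^ 2)⁻¹ ≤ 4 * (1 + x ^ 2)⁻¹ := by
  have hsq : (y - x) ^ 2 ≤ 1 := by nlinarith [sq_abs (y - x), abs_nonneg (y - x)]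
  calc (1 + y ^ 2)⁻¹ = 4 * (4 * (1 + y ^ 2))⁻¹ := by field_simp
    _ ≤ 4 * (1 + x ^ 2)⁻¹ := by gcongr; nlinarith [sq_nonneg (x + y)]

theorem norm_sub_le_of_norm_deriv_le_mul_inv_one_add_sq {g : ℝ → ℂ} (hg : Differentiable ℝ g)
    {K : ℝ} (hK : ∀ y, ‖deriv g y‖ ≤ K * (1 + y ^ 2)⁻¹) {h : ℝ} (hh : |h| ≤ 1) (x : ℝ) :
    ‖g (x + h) - g x‖ ≤ 4 * K * |h| * (1 + x ^ 2)⁻¹ := by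
  have hK₀ : 0 ≤ K := by simpa using (norm_nonneg _).trans (hK 0)
  have hbound : ∀ y ∈ Metric.closedBall x 1, ‖deriv g y‖ ≤ 4 * K * (1 + x ^ 2)⁻¹ := by
    intro y hy
    calc ‖deriv g y‖ ≤ K * (1 + y ^ 2)⁻¹ := hK y
      _ ≤ K * (4 * (1 + x ^ 2)⁻¹) := by
          gcongr
          exact inv_one_add_sq_le_four_mul (by rwa [Metric.mem_closedBall, Real.dist_eq] at hy)
      _ = 4 * K * (1 + x ^ 2)⁻¹ := by ring
  have hmvt := (convex_closedBall x 1).norm_image_sub_le_of_norm_deriv_le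
    (fun y _ => hg y) hbound (Metric.mem_closedBall_self zero_le_one) (y := x + h)
    (by simpa [Metric.mem_closedBall, Real.dist_eq] using hh)
  calc ‖g (x + h) - g x‖ ≤ 4 * K * (1 + x ^ 2)⁻¹ * ‖x + h - x‖ := hmvt
    _ = 4 * K * |h| * (1 + x ^ 2)⁻¹ := by rw [add_sub_cancel_left, Real.norm_eq_abs]; ring

theorem memLp_inv_one_add_sq : MemLp (fun x : ℝ => (1 + x ^ 2)⁻¹) 2 volume := by
  have hmeas : AEStronglyMeasurable (fun x : ℝ => (1 + x ^ 2)⁻¹) volume :=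
    (by fun_prop : Measurable fun x : ℝ => (1 + x ^ 2)⁻¹).aestronglyMeasurable
  refine (memLp_two_iff_integrable_sq hmeas).2 (integrable_inv_one_add_sq.mono
    (hmeas.pow 2) (Eventually.of_forall fun x => ?_))
  have hle : (1 + x ^ 2)⁻¹ ≤ 1 := inv_le_one_of_one_le₀ (by nlinarith)
  have hpos : 0 < (1 + x ^ 2)⁻¹ := by positivity
  rw [Real.norm_of_nonneg (by positivity), Real.norm_of_nonneg hpos.le]
  nlinarith

theorem eLpNorm_le_of_norm_le_mul_inv_one_add_sq {E : Type*} [NormedAddCommGroup E]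
    {g : ℝ → E} {D : ℝ} (hg : ∀ x, ‖g x‖ ≤ D * (1 + x ^ 2)⁻¹) :
    eLpNorm g 2 volume ≤ ENNReal.ofReal D * eLpNorm (fun x : ℝ => (1 + x ^ 2)⁻¹) 2 volume := by
  have hD : 0 ≤ D := by simpa using (norm_nonneg _).trans (hg 0)
  calc eLpNorm g 2 volume ≤ eLpNorm (fun x : ℝ => D * (1 + x ^ 2)⁻¹) 2 volume :=
        eLpNorm_mono_real hg
    _ = ENNReal.ofReal D * eLpNorm (fun x : ℝ => (1 + x ^ 2)⁻¹) 2 volume := by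
        rw [← Real.enorm_of_nonneg hD, ← eLpNorm_const_smul]
        rfl


noncomputable def besovDiffSeminorm (σ : ℝ) (q : ℝ≥0∞) (m : ℕ) (f : ℝ → ℂ) : ℝ≥0∞ :=
  if q = ⊤ then
    ⨆ (h : ℝ) (_ : h ≠ 0), ENNReal.ofReal (|h| ^ (-σ)) * eLpNorm (iterDiff h m f) 2 volume
  else
    (∫⁻ t in Ioo (0 : ℝ) 1,
        (ENNReal.ofReal (t ^ (-σ)) *
          ⨆ (h : ℝ) (_ : |h| ≤ t), eLpNorm (iterDiff h m f) 2 volume) ^ q.toReal /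
          ENNReal.ofReal t) ^ (1 / q.toReal)

theorem besovDiffNorm_eq_add (σ : ℝ) (q : ℝ≥0∞) (m : ℕ) (f : ℝ → ℂ) :
    besovDiffNorm σ q m f = eLpNorm f 2 volume + besovDiffSeminorm σ q m f :=
  rfl

theorem eLpNorm_le_besovDiffNorm (σ : ℝ) (q : ℝ≥0∞) (m : ℕ) (f : ℝ → ℂ) :
    eLpNorm f 2 volume ≤ besovDiffNorm σ q m f :=
  le_self_add

/-- `(∫₀¹ t^{(m-σ)q} dt/t)^{1/q} = ((m-σ)q)^{-1/q}` for finite `q`. -/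
noncomputable def besovDiffConst (σ : ℝ) (q : ℝ≥0∞) (m : ℕ) : ℝ≥0∞ :=
  if q = ⊤ then 1 else ENNReal.ofReal ((((m : ℝ) - σ) * q.toReal)⁻¹) ^ (1 / q.toReal)

theorem besovDiffConst_ne_top (σ : ℝ) (q : ℝ≥0∞) (m : ℕ) : besovDiffConst σ q m ≠ ∞ := by
  unfold besovDiffConst
  split_ifs
  · exact one_ne_top
  · exact rpow_ne_top_of_nonneg (by positivity) ofReal_ne_top

theorem lintegral_Ioo_zero_one_rpow {γ : ℝ} (hγ : -1 < γ) :
    ∫⁻ t in Ioo (0 : ℝ) 1, ENNReal.ofReal (t ^ γ) = ENNReal.ofReal (γ + 1)⁻¹ := by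
  have hint : IntegrableOn (fun t : ℝ => t ^ γ) (Ioc 0 1) :=
    (intervalIntegrable_iff_integrableOn_Ioc_of_le zero_le_one).1
      (intervalIntegral.intervalIntegrable_rpow' hγ)
  rw [← ofReal_integral_eq_lintegral_ofReal (hint.mono_set Ioo_subset_Ioc_self)
    ((ae_restrict_iff' measurableSet_Ioo).2 (Eventually.of_forall fun t ht =>
      Real.rpow_nonneg ht.1.le γ)),
    ← integral_Ioc_eq_integral_Ioo, ← intervalIntegral.integral_of_le zero_le_one,
    integral_rpow (Or.inl hγ)]
  simp [Real.zero_rpow (by linarith : γ + 1 ≠ 0)]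

theorem besovDiffSeminorm_top_le {σ : ℝ} (hσ : 0 ≤ σ) {m : ℕ} (hσm : σ ≤ m) {f : ℝ → ℂ}
    {A B : ℝ≥0∞}
    (hA : ∀ h, |h| ≤ 1 → eLpNorm (iterDiff h m f) 2 volume ≤ ENNReal.ofReal (|h| ^ m) * A)
    (hB : ∀ h, eLpNorm (iterDiff h m f) 2 volume ≤ B) :
    besovDiffSeminorm σ ⊤ m f ≤ A + B := by
  simp only [besovDiffSeminorm, if_true]
  refine iSup₂_le fun h hh => ?_
  have habs : 0 < |h| := abs_pos.2 hh
  rcases le_or_gt |h| 1 with hsmall | hlarge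
  · calc ENNReal.ofReal (|h| ^ (-σ)) * eLpNorm (iterDiff h m f) 2 volume
        ≤ ENNReal.ofReal (|h| ^ (-σ)) * (ENNReal.ofReal (|h| ^ m) * A) := by
          gcongr
          exact hA h hsmall
      _ = ENNReal.ofReal (|h| ^ ((m : ℝ) - σ)) * A := by
          rw [← mul_assoc, ← ENNReal.ofReal_mul (by positivity), ← Real.rpow_natCast,
            ← Real.rpow_add habs, neg_add_eq_sub]
      _ ≤ 1 * A := by
          gcongr
          exact ofReal_le_one.2 (Real.rpow_le_one habs.le hsmall (by linarith))
      _ ≤ A + B := by rw [one_mul]; exact le_self_add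
  · calc ENNReal.ofReal (|h| ^ (-σ)) * eLpNorm (iterDiff h m f) 2 volume ≤ 1 * B := by
          gcongr
          · exact ofReal_le_one.2 (Real.rpow_le_one_of_one_le_of_nonpos hlarge.le (by linarith))
          · exact hB h
      _ ≤ A + B := by rw [one_mul]; exact le_add_self

theorem besovDiffSeminorm_le_of_ne_top {σ : ℝ} {q : ℝ≥0∞} (hq₀ : q ≠ 0) (hq : q ≠ ⊤) {m : ℕ}
    (hσm : σ < m) {f : ℝ → ℂ} {A : ℝ≥0∞}
    (hA : ∀ h, |h| ≤ 1 → eLpNorm (iterDiff h m f) 2 volume ≤ ENNReal.ofReal (|h| ^ m) * A) :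
    besovDiffSeminorm σ q m f ≤ besovDiffConst σ q m * A := by
  set p := q.toReal
  have hp : 0 < p := toReal_pos hq₀ hq
  have hγ : -1 < ((m : ℝ) - σ) * p - 1 := by nlinarith
  have hintegrand : ∀ t ∈ Ioo (0 : ℝ) 1,
      (ENNReal.ofReal (t ^ (-σ)) * ⨆ (h : ℝ) (_ : |h| ≤ t), eLpNorm (iterDiff h m f) 2 volume) ^ p /
        ENNReal.ofReal t ≤ ENNReal.ofReal (t ^ (((m : ℝ) - σ) * p - 1)) * A ^ p := by
    rintro t ⟨ht₀, ht₁⟩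
    have hsup : ⨆ (h : ℝ) (_ : |h| ≤ t), eLpNorm (iterDiff h m f) 2 volume ≤
        ENNReal.ofReal (t ^ m) * A := by
      refine iSup₂_le fun h hh => (hA h (hh.trans ht₁.le)).trans ?_
      gcongr
    calc (ENNReal.ofReal (t ^ (-σ)) * ⨆ (h : ℝ) (_ : |h| ≤ t),
            eLpNorm (iterDiff h m f) 2 volume) ^ p / ENNReal.ofReal t
        ≤ (ENNReal.ofReal (t ^ (-σ)) * (ENNReal.ofReal (t ^ m) * A)) ^ p / ENNReal.ofReal t := by
          gcongr
      _ = ENNReal.ofReal ((t ^ ((m : ℝ) - σ)) ^ p / t) * A ^ p := by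
          rw [← mul_assoc, ← ENNReal.ofReal_mul (by positivity),
            ENNReal.mul_rpow_of_nonneg _ _ hp.le, ENNReal.ofReal_rpow_of_nonneg (by positivity) hp.le,
            div_eq_mul_inv, mul_right_comm, ← div_eq_mul_inv, ← ENNReal.ofReal_div_of_pos ht₀,
            ← Real.rpow_natCast, ← Real.rpow_add ht₀, neg_add_eq_sub]
      _ = ENNReal.ofReal (t ^ (((m : ℝ) - σ) * p - 1)) * A ^ p := by
          rw [← Real.rpow_mul ht₀.le, Real.rpow_sub_one ht₀.ne']
  calc besovDiffSeminorm σ q m f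
      ≤ (∫⁻ t in Ioo (0 : ℝ) 1, ENNReal.ofReal (t ^ (((m : ℝ) - σ) * p - 1)) * A ^ p) ^
          (1 / p) := by
        simp only [besovDiffSeminorm, if_neg hq]
        gcongr ?_ ^ _
        exact setLIntegral_mono' measurableSet_Ioo hintegrand
    _ = besovDiffConst σ q m * A := by
        rw [lintegral_mul_const _ (by fun_prop), lintegral_Ioo_zero_one_rpow hγ,
          ENNReal.mul_rpow_of_nonneg _ _ (by positivity), ← ENNReal.rpow_mul,
          mul_one_div_cancel hp.ne', ENNReal.rpow_one, besovDiffConst, if_neg hq, sub_add_cancel]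

theorem besovDiffSeminorm_le {σ : ℝ} (hσ : 0 ≤ σ) {q : ℝ≥0∞} (hq : q ≠ 0) {m : ℕ} (hσm : σ < m)
    {f : ℝ → ℂ} {A B : ℝ≥0∞}
    (hA : ∀ h, |h| ≤ 1 → eLpNorm (iterDiff h m f) 2 volume ≤ ENNReal.ofReal (|h| ^ m) * A)
    (hB : ∀ h, eLpNorm (iterDiff h m f) 2 volume ≤ B) :
    besovDiffSeminorm σ q m f ≤ besovDiffConst σ q m * A + B := by
  by_cases hq_top : q = ⊤
  · subst hq_top
    simpa [besovDiffConst] using besovDiffSeminorm_top_le hσ hσm.le hA hB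
  · exact (besovDiffSeminorm_le_of_ne_top hq hq_top hσm hA).trans le_self_add

theorem besovDiffNorm_zero (σ : ℝ) {q : ℝ≥0∞} (hq : q ≠ 0) (m : ℕ) :
    besovDiffNorm σ q m (fun _ => 0) = 0 := by
  rw [besovDiffNorm_eq_add, besovDiffSeminorm, ← Pi.zero_def]
  simp only [iterDiff_zero_fun]
  split_ifs with hq_top
  · simp
  · have hp : 0 < q.toReal := toReal_pos hq hq_top
    simp [ENNReal.zero_rpow_of_pos hp, hp]

namespace SchwartzMap

theorem exists_norm_le_mul_inv_one_add_sq {F : Type*} [NormedAddCommGroup F] [NormedSpace ℝ F]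
    (f : 𝓢(ℝ, F)) : ∃ D : ℝ, ∀ x, ‖f x‖ ≤ D * (1 + x ^ 2)⁻¹ := by
  obtain ⟨C₀, -, hC₀⟩ := f.decay 0 0
  obtain ⟨C₂, -, hC₂⟩ := f.decay 2 0
  refine ⟨C₀ + C₂, fun x => ?_⟩
  have h₀ := hC₀ x
  have h₂ := hC₂ x
  simp only [pow_zero, one_mul, norm_iteratedFDeriv_zero, Real.norm_eq_abs, sq_abs] at h₀ h₂
  rw [← div_eq_mul_inv, le_div_iff₀ (by positivity)]
  nlinarith

theorem exists_norm_iterDiff_le (m : ℕ) (f : 𝓢(ℝ, ℂ)) :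
    ∃ D : ℝ, ∀ h, |h| ≤ 1 → ∀ x, ‖iterDiff h m f x‖ ≤ D * |h| ^ m * (1 + x ^ 2)⁻¹ := by
  induction m generalizing f with
  | zero =>
    obtain ⟨D, hD⟩ := f.exists_norm_le_mul_inv_one_add_sq
    exact ⟨D, fun h _ x => by simpa [iterDiff] using hD x⟩
  | succ m ih =>
    obtain ⟨D, hD⟩ := ih (derivCLM ℝ ℂ f)
    refine ⟨4 * D, fun h hh x => ?_⟩
    have hderiv : ∀ y, ‖deriv (iterDiff h m f) y‖ ≤ D * |h| ^ m * (1 + y ^ 2)⁻¹ := by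
      intro y
      rw [deriv_iterDiff f.differentiable]
      exact hD h hh y
    calc ‖iterDiff h (m + 1) f x‖ ≤ 4 * (D * |h| ^ m) * |h| * (1 + x ^ 2)⁻¹ := by
          rw [iterDiff_succ]
          exact norm_sub_le_of_norm_deriv_le_mul_inv_one_add_sq (f.differentiable.iterDiff h m)
            hderiv hh x
      _ = 4 * D * |h| ^ (m + 1) * (1 + x ^ 2)⁻¹ := by ring

theorem exists_eLpNorm_iterDiff_le (m : ℕ) (f : 𝓢(ℝ, ℂ)) :
    ∃ A ≠ ∞, ∀ h, |h| ≤ 1 →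
      eLpNorm (iterDiff h m f) 2 volume ≤ ENNReal.ofReal (|h| ^ m) * A := by
  obtain ⟨D, hD⟩ := f.exists_norm_iterDiff_le m
  refine ⟨ENNReal.ofReal D * eLpNorm (fun x : ℝ => (1 + x ^ 2)⁻¹) 2 volume,
    ENNReal.mul_ne_top ofReal_ne_top memLp_inv_one_add_sq.eLpNorm_ne_top, fun h hh => ?_⟩
  calc eLpNorm (iterDiff h m f) 2 volume
      ≤ ENNReal.ofReal (D * |h| ^ m) * eLpNorm (fun x : ℝ => (1 + x ^ 2)⁻¹) 2 volume :=
        eLpNorm_le_of_norm_le_mul_inv_one_add_sq (hD h hh)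
    _ = ENNReal.ofReal (|h| ^ m) *
          (ENNReal.ofReal D * eLpNorm (fun x : ℝ => (1 + x ^ 2)⁻¹) 2 volume) := by
        rw [mul_comm D, ENNReal.ofReal_mul (by positivity), mul_assoc]

theorem exists_besovDiffNorm_comp_div_le {σ : ℝ} (hσ : 0 ≤ σ) {q : ℝ≥0∞}
    (hq : q ≠ 0) {m : ℕ} (hσm : σ < m) (f : 𝓢(ℝ, ℂ)) :
    ∃ A ≠ ∞, ∀ s : ℝ, 1 ≤ s → besovDiffNorm σ q m (fun x => f (x / s)) ≤
      ENNReal.ofReal s ^ (1 / 2 : ℝ) *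
        ((2 ^ m + 1) * eLpNorm f 2 volume + ENNReal.ofReal s⁻¹ * A) := by
  have hm : m ≠ 0 := by rintro rfl; simp at hσm; linarith
  obtain ⟨A, hA_top, hA⟩ := f.exists_eLpNorm_iterDiff_le m
  refine ⟨besovDiffConst σ q m * A, mul_ne_top (besovDiffConst_ne_top σ q m) hA_top,
    fun s hs => ?_⟩
  have hs₀ : 0 < s := zero_lt_one.trans_le hs
  have hf := f.continuous.aestronglyMeasurable (μ := volume)
  have hdiff : ∀ h, eLpNorm (iterDiff h m (fun x => f (x / s))) 2 volume =
      ENNReal.ofReal s ^ (1 / 2 : ℝ) * eLpNorm (iterDiff (h / s) m f) 2 volume := fun h => by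
    rw [iterDiff_comp_div, eLpNorm_two_comp_div (hf.iterDiff _ m) hs₀]
  have hsmall : ∀ h, |h| ≤ 1 → eLpNorm (iterDiff h m (fun x => f (x / s))) 2 volume ≤
      ENNReal.ofReal (|h| ^ m) * (ENNReal.ofReal s ^ (1 / 2 : ℝ) * (ENNReal.ofReal s⁻¹ * A)) := by
    intro h hh
    have hscale : |h / s| ^ m ≤ |h| ^ m * s⁻¹ := by
      rw [abs_div, abs_of_pos hs₀, div_eq_mul_inv, mul_pow]
      gcongr
      exact pow_le_of_le_one (by positivity) (inv_le_one_of_one_le₀ hs) hm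
    calc eLpNorm (iterDiff h m (fun x => f (x / s))) 2 volume
        ≤ ENNReal.ofReal s ^ (1 / 2 : ℝ) * (ENNReal.ofReal (|h / s| ^ m) * A) := by
          rw [hdiff]
          gcongr
          exact hA _ (by rw [abs_div, abs_of_pos hs₀, div_le_one hs₀]; linarith)
      _ ≤ ENNReal.ofReal s ^ (1 / 2 : ℝ) * (ENNReal.ofReal (|h| ^ m * s⁻¹) * A) := by gcongr
      _ = _ := by rw [ENNReal.ofReal_mul (by positivity)]; ring
  have hlarge : ∀ h, eLpNorm (iterDiff h m (fun x => f (x / s))) 2 volume ≤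
      ENNReal.ofReal s ^ (1 / 2 : ℝ) * (2 ^ m * eLpNorm f 2 volume) := fun h => by
    rw [hdiff]
    gcongr
    exact eLpNorm_iterDiff_le one_le_two hf _ m
  calc besovDiffNorm σ q m (fun x => f (x / s))
      ≤ ENNReal.ofReal s ^ (1 / 2 : ℝ) * eLpNorm f 2 volume +
          (besovDiffConst σ q m * (ENNReal.ofReal s ^ (1 / 2 : ℝ) * (ENNReal.ofReal s⁻¹ * A)) +
            ENNReal.ofReal s ^ (1 / 2 : ℝ) * (2 ^ m * eLpNorm f 2 volume)) := by
        rw [besovDiffNorm_eq_add, eLpNorm_two_comp_div hf hs₀]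
        gcongr
        exact besovDiffSeminorm_le hσ hq hσm hsmall hlarge
    _ = _ := by ring

theorem eventually_besovDiffNorm_comp_div_le {σ : ℝ} (hσ : 0 ≤ σ) {q : ℝ≥0∞}
    (hq : q ≠ 0) {m : ℕ} (hσm : σ < m) (f : 𝓢(ℝ, ℂ)) :
    ∀ᶠ s in atTop, besovDiffNorm σ q m (fun x => f (x / s)) ≤
      ENNReal.ofReal s ^ (1 / 2 : ℝ) * ((2 ^ m + 2) * besovDiffNorm σ q m f) := by
  rcases eq_or_ne (eLpNorm f 2 volume) 0 with hf | hf
  · have hf₀ : (f : ℝ → ℂ) = 0 := f.continuous.ae_eq_iff_eq volume continuous_zero |>.1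
      ((eLpNorm_eq_zero_iff f.continuous.aestronglyMeasurable two_ne_zero).1 hf)
    refine Eventually.of_forall fun s => ?_
    simp [hf₀, besovDiffNorm_zero σ hq m]
  obtain ⟨A, hA, hbound⟩ := f.exists_besovDiffNorm_comp_div_le hσ hq hσm
  have hsmall : ∀ᶠ s : ℝ in atTop, ENNReal.ofReal s⁻¹ * A < eLpNorm f 2 volume := by
    have : Tendsto (fun s : ℝ => ENNReal.ofReal s⁻¹ * A) atTop (𝓝 0) := by
      simpa using ENNReal.Tendsto.mul_const (ENNReal.tendsto_ofReal tendsto_inv_atTop_zero)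
        (Or.inr hA)
    exact this.eventually_lt_const (pos_iff_ne_zero.2 hf)
  filter_upwards [hsmall, eventually_ge_atTop 1] with s hsmall hs
  refine (hbound s hs).trans (mul_le_mul_right ?_ _)
  calc (2 ^ m + 1) * eLpNorm f 2 volume + ENNReal.ofReal s⁻¹ * A
      ≤ (2 ^ m + 1) * eLpNorm f 2 volume + eLpNorm f 2 volume := by gcongr
    _ = (2 ^ m + 2) * eLpNorm f 2 volume := by ring
    _ ≤ (2 ^ m + 2) * besovDiffNorm σ q m f := by
        gcongr
        exact eLpNorm_le_besovDiffNorm σ q m f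

end SchwartzMap

/-- For `σ > 0`, `1 ≤ q ≤ ∞`, `δ > 0` and `f` Schwartz, for `λ ≫ 1`:
`λ^{δ/2} ‖f‖_{L²} ≲ ‖f(·/λ^δ)‖_{B^σ_{2,q}} ≲ λ^{δ/2} ‖f‖_{B^σ_{2,q}}`,
with implicit constants independent of `λ` and `f`. -/
theorem besov_norm_dilation_bounds (σ : ℝ) (hσ : 0 < σ) (q : ℝ≥0∞) (hq : 1 ≤ q)
    (δ : ℝ) (hδ : 0 < δ) (m : ℕ) (hm : σ < m) :
    ∃ c C : ℝ, 0 < c ∧ 0 < C ∧ ∀ f : SchwartzMap ℝ ℂ, ∃ Λ : ℝ, 1 ≤ Λ ∧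
      ∀ lam : ℝ, Λ ≤ lam →
        ENNReal.ofReal (c * lam ^ (δ / 2)) * eLpNorm (f : ℝ → ℂ) 2 volume ≤
            besovDiffNorm σ q m (fun x => f (x / lam ^ δ)) ∧
          besovDiffNorm σ q m (fun x => f (x / lam ^ δ)) ≤
            ENNReal.ofReal (C * lam ^ (δ / 2)) * besovDiffNorm σ q m (f : ℝ → ℂ) := by
  have hq₀ : q ≠ 0 := (zero_lt_one.trans_le hq).ne'
  refine ⟨1, 2 ^ m + 2, one_pos, by positivity, fun f => ?_⟩
  obtain ⟨Λ, hΛ⟩ := eventually_atTop.1 <|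
    (tendsto_rpow_atTop hδ).eventually (f.eventually_besovDiffNorm_comp_div_le hσ.le hq₀ hm)
  refine ⟨max 1 Λ, le_max_left _ _, fun lam hlam => ?_⟩
  have hlam₀ : 0 < lam := zero_lt_one.trans_le ((le_max_left _ _).trans hlam)
  have hpow : ENNReal.ofReal (lam ^ (δ / 2)) = ENNReal.ofReal (lam ^ δ) ^ (1 / 2 : ℝ) := by
    rw [ENNReal.ofReal_rpow_of_nonneg (by positivity) (by norm_num), ← Real.rpow_mul hlam₀.le]
    ring_nf
  constructor
  · rw [one_mul, hpow, ← eLpNorm_two_comp_div f.continuous.aestronglyMeasurable (by positivity)]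
    exact eLpNorm_le_besovDiffNorm σ q m _
  · refine (hΛ lam ((le_max_right _ _).trans hlam)).trans_eq ?_
    rw [ENNReal.ofReal_mul (by positivity), hpow, ENNReal.ofReal_add (by positivity) zero_le_two,
      ENNReal.ofReal_pow zero_le_two]
    norm_num
    ring
end
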